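/- arXiv:1807.05124 — 2 statements merged into one kernel-verified Lean document; each statement's English description precedes it below -/
import Mathlib

section
/- Let X be an eventually dendric shift space (there is m such that the extension graph E₁(w) is a tree for every w ∈ L(X) of length ≥ m). Then the sequence sₙ(X) = p_{n+1}(X) - pₙ(X) is eventually constant; consequently the complexity pₙ(X) is eventually of the form pₙ(X) = c·n + d, i.e., at most linear. -/
/-- `L` is factorial: factors of its elements belong to it. -/
def Factorial {A : Type*} (L : Set (List A)) : Prop :=
  ∀ u v : List A, u ++ v ∈ L → u ∈ L ∧ v ∈ L

/-- `L` is (bi)extendable: every word extends by a letter on both sides. -/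
def Extendable {A : Type*} (L : Set (List A)) : Prop :=
  ∀ w ∈ L, ∃ a b : A, a :: (w ++ [b]) ∈ L

/-- number of one-letter left extensions `ℓ(w)`. -/
noncomputable def lcount {A : Type*} (L : Set (List A)) (w : List A) : ℕ :=
  Set.ncard {a : A | a :: w ∈ L}

/-- number of one-letter right extensions `r(w)`. -/
noncomputable def rcount {A : Type*} (L : Set (List A)) (w : List A) : ℕ :=
  Set.ncard {b : A | w ++ [b] ∈ L}

/-- number of one-letter bi-extensions `e(w)`. -/
noncomputable def ecount {A : Type*} (L : Set (List A)) (w : List A) : ℕ :=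
  Set.ncard {p : A × A | p.1 :: (w ++ [p.2]) ∈ L}
/-- The extension graph `E₁(w)`: bipartite graph on `L₁(w) ⊔ R₁(w)` with
edges the pairs `(a,b)` such that `awb ∈ L`. -/
def extGraph {A : Type*} (L : Set (List A)) (w : List A) :
    SimpleGraph ({a : A // a :: w ∈ L} ⊕ {b : A // w ++ [b] ∈ L}) where
  Adj x y :=
    match x, y with
    | Sum.inl a, Sum.inr b => a.1 :: (w ++ [b.1]) ∈ L
    | Sum.inr b, Sum.inl a => a.1 :: (w ++ [b.1]) ∈ L
    | _, _ => False
  symm := ⟨by rintro (a | b) (c | d) h <;> first | exact h | exact h.elim⟩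
  loopless := ⟨by rintro (a | b) h <;> exact h.elim⟩

/-- `L` is eventually dendric with threshold `m`. -/
def EvDendricWith {A : Type*} (L : Set (List A)) (m : ℕ) : Prop :=
  ∀ w ∈ L, m ≤ w.length → (extGraph L w).IsTree

/-- `L` is eventually dendric. -/
def EvDendric {A : Type*} (L : Set (List A)) : Prop :=
  ∃ m, EvDendricWith L m


/-!
Every word of length `n + 1` (resp. `n + 2`) is uniquely `wb` or `aw` (resp. `awb`) with `|w| = n`,
so `p (n + 1) = ∑ r(w) = ∑ ℓ(w)` and `p (n + 2) = ∑ e(w)`, the sums ranging over `L`-words `w` of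
length `n`. The bi-extensions of `w` are the edges of `E₁(w)` and its extensions the vertices, so
when `E₁(w)` is a tree `e(w) + 1 = ℓ(w) + r(w)`. Summing gives `p (n + 2) + p n = 2 p (n + 1)`
beyond the threshold: `s` is eventually constant and `p` eventually affine.
-/

section Counting

variable {A : Type*} [Finite A] (L : Set (List A))

noncomputable def wordsOfLength (n : ℕ) : Finset (List A) :=
  ((List.finite_length_eq A n).subset fun _ hw => hw.2 :
    {w | w ∈ L ∧ w.length = n}.Finite).toFinset

variable {L}

@[simp]
theorem mem_wordsOfLength {n : ℕ} {w : List A} :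
    w ∈ wordsOfLength L n ↔ w ∈ L ∧ w.length = n := by
  simp [wordsOfLength]

theorem ncard_eq_card_wordsOfLength (n : ℕ) :
    {w | w ∈ L ∧ w.length = n}.ncard = (wordsOfLength L n).card :=
  Set.ncard_eq_toFinset_card _ _

theorem card_wordsOfLength_add_eq_sum {X : Type*} [Finite X] {n k : ℕ}
    (ext : List A → X → List A)
    (hinj : ∀ w w' x x', ext w x = ext w' x' → w = w' ∧ x = x')
    (hlen : ∀ w x, (ext w x).length = w.length + k)
    (hsurj : ∀ v : List A, v.length = n + k → ∃ w x, ext w x = v)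
    (hfac : ∀ w x, ext w x ∈ L → w ∈ L) :
    (wordsOfLength L (n + k)).card = ∑ w ∈ wordsOfLength L n, {x | ext w x ∈ L}.ncard := by
  let T : List A → Finset X := fun w => (Set.toFinite {x | ext w x ∈ L}).toFinset
  have hT : ∀ w, {x | ext w x ∈ L}.ncard = (T w).card := fun w => Set.ncard_eq_toFinset_card _ _
  simp only [hT]
  rw [← Finset.card_sigma]
  symm
  refine Finset.card_bij (fun q _ => ext q.1 q.2) ?_ ?_ ?_
  · rintro ⟨w, x⟩ hwx
    simp only [Finset.mem_sigma, mem_wordsOfLength, T, Set.Finite.mem_toFinset,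
      Set.mem_ofPred_eq] at hwx ⊢
    exact ⟨hwx.2, by rw [hlen, hwx.1.2]⟩
  · rintro ⟨w, x⟩ _ ⟨w', x'⟩ _ h
    obtain ⟨rfl, rfl⟩ := hinj w w' x x' h
    rfl
  · intro v hv
    rw [mem_wordsOfLength] at hv
    obtain ⟨w, x, rfl⟩ := hsurj v hv.2
    have hw : w.length = n := by have := hlen w x; omega
    exact ⟨⟨w, x⟩, by simp [T, hv.1, hw, hfac w x hv.1], rfl⟩

theorem card_wordsOfLength_succ_eq_sum_rcount (hfac : Factorial L) (n : ℕ) :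
    (wordsOfLength L (n + 1)).card = ∑ w ∈ wordsOfLength L n, rcount L w := by
  refine card_wordsOfLength_add_eq_sum (fun w b => w ++ [b]) (fun _ _ _ _ h => by simpa using h)
    (fun _ _ => List.length_append ..) (fun v hv => ?_) (fun w b h => (hfac w [b] h).1)
  obtain ⟨w, b, rfl⟩ := v.eq_nil_or_concat'.resolve_left (by rintro rfl; simp at hv)
  exact ⟨w, b, rfl⟩

theorem card_wordsOfLength_succ_eq_sum_lcount (hfac : Factorial L) (n : ℕ) :
    (wordsOfLength L (n + 1)).card = ∑ w ∈ wordsOfLength L n, lcount L w := by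
  refine card_wordsOfLength_add_eq_sum (fun w a => a :: w)
    (fun _ _ _ _ h => by simpa [and_comm] using h) (fun _ _ => List.length_cons)
    (fun v hv => ?_) (fun w a h => (hfac [a] w h).2)
  obtain ⟨a, w, rfl⟩ := List.exists_cons_of_length_eq_add_one hv
  exact ⟨w, a, rfl⟩

theorem card_wordsOfLength_add_two_eq_sum_ecount (hfac : Factorial L) (n : ℕ) :
    (wordsOfLength L (n + 2)).card = ∑ w ∈ wordsOfLength L n, ecount L w := by
  refine card_wordsOfLength_add_eq_sum (X := A × A) (fun w p => p.1 :: (w ++ [p.2]))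
    (fun _ _ ⟨a, b⟩ ⟨a', b'⟩ h => ?_) (fun _ _ => by simp) (fun v hv => ?_)
    (fun w p h => (hfac w [p.2] (hfac [p.1] _ h).2).1)
  · obtain ⟨rfl, h⟩ := List.cons_eq_cons.mp h
    obtain ⟨rfl, h⟩ := List.append_inj' h rfl
    simp_all
  · obtain ⟨a, u, rfl⟩ := List.exists_cons_of_length_eq_add_one hv
    obtain ⟨w, b, rfl⟩ := u.eq_nil_or_concat'.resolve_left (by rintro rfl; simp at hv)
    exact ⟨w, (a, b), rfl⟩

end Counting

section ExtensionGraph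

variable {A : Type*} {L : Set (List A)}

theorem nat_card_edgeSet_extGraph (hfac : Factorial L) (w : List A) :
    Nat.card (extGraph L w).edgeSet = ecount L w := by
  rw [ecount, ← Nat.card_coe_set_eq]
  symm
  refine Nat.card_eq_of_bijective
    (fun p => ⟨s(.inl ⟨p.1.1, (hfac (p.1.1 :: w) [p.1.2] p.2).1⟩,
      .inr ⟨p.1.2, (hfac [p.1.1] (w ++ [p.1.2]) p.2).2⟩), p.2⟩) ⟨?_, ?_⟩
  · rintro ⟨⟨a, b⟩, _⟩ ⟨⟨c, d⟩, _⟩ h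
    have h' := congrArg Subtype.val h
    simp only [Sym2.eq, Sym2.rel_iff', Prod.mk.injEq, Sum.inl.injEq, Subtype.mk.injEq,
      Sum.inr.injEq, Prod.swap_prod_mk, reduceCtorEq, and_self, or_false] at h'
    obtain ⟨rfl, rfl⟩ := h'
    rfl
  · rintro ⟨e, he⟩
    induction e using Sym2.ind with
    | _ x y =>
      rw [SimpleGraph.mem_edgeSet] at he
      match x, y with
      | .inl a, .inr b => exact ⟨⟨(a.1, b.1), he⟩, rfl⟩
      | .inr b, .inl a => exact ⟨⟨(a.1, b.1), he⟩, Subtype.ext Sym2.eq_swap⟩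

theorem SimpleGraph.IsTree.ecount_add_one [Finite A] (hfac : Factorial L) {w : List A}
    (htree : (extGraph L w).IsTree) : ecount L w + 1 = lcount L w + rcount L w := by
  rw [← nat_card_edgeSet_extGraph hfac, (SimpleGraph.isTree_iff_connected_and_card.mp htree).2,
    Nat.card_sum]
  exact congrArg₂ (· + ·) (Nat.card_coe_set_eq _) (Nat.card_coe_set_eq _)

end ExtensionGraph

theorem card_wordsOfLength_add_two_add_card {A : Type*} [Finite A] {L : Set (List A)} {m n : ℕ}
    (hfac : Factorial L) (hm : EvDendricWith L m) (hn : m ≤ n) :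
    (wordsOfLength L (n + 2)).card + (wordsOfLength L n).card =
      2 * (wordsOfLength L (n + 1)).card :=
  calc (wordsOfLength L (n + 2)).card + (wordsOfLength L n).card
      = ∑ w ∈ wordsOfLength L n, (ecount L w + 1) := by
        rw [card_wordsOfLength_add_two_eq_sum_ecount hfac, Finset.sum_add_distrib,
          Finset.sum_const, smul_eq_mul, mul_one]
    _ = ∑ w ∈ wordsOfLength L n, (lcount L w + rcount L w) := by
        refine Finset.sum_congr rfl fun w hw => ?_
        rw [mem_wordsOfLength] at hw
        exact (hm w hw.1 (hw.2 ▸ hn)).ecount_add_one hfac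
    _ = 2 * (wordsOfLength L (n + 1)).card := by
        rw [Finset.sum_add_distrib, ← card_wordsOfLength_succ_eq_sum_lcount hfac,
          ← card_wordsOfLength_succ_eq_sum_rcount hfac, two_mul]

theorem eq_of_forall_le_succ_eq {α : Type*} {f : ℕ → α} {N : ℕ}
    (h : ∀ n, N ≤ n → f (n + 1) = f n) : ∀ n, N ≤ n → f n = f N := by
  intro n hn
  induction n, hn using Nat.le_induction with
  | base => rfl
  | succ n hn ih => rw [h n hn, ih]

theorem eq_mul_add_of_forall_le_sub_eq {p : ℕ → ℤ} {c : ℤ} {N : ℕ}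
    (h : ∀ n, N ≤ n → p (n + 1) - p n = c) : ∀ n, N ≤ n → p n = c * n + (p N - c * N) := by
  intro n hn
  induction n, hn using Nat.le_induction with
  | base => ring
  | succ n hn ih =>
    rw [eq_add_of_sub_eq' (h n hn), ih]
    push_cast
    ring

theorem stmt6_general {A : Type*} [Fintype A] (L : Set (List A))
    (hfac : Factorial L)
    (hdendric : EvDendric L)
    (p : ℕ → ℤ) (hp : ∀ m, p m = Set.ncard {w : List A | w ∈ L ∧ w.length = m})
    (s : ℕ → ℤ) (hs : ∀ m, s m = p (m + 1) - p m) :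
    ∃ N : ℕ, (∀ n, N ≤ n → s n = s N) ∧
      ∃ c d : ℤ, ∀ n, N ≤ n → p n = c * n + d := by
  obtain ⟨m, hm⟩ := hdendric
  have hp_card : ∀ n, p n = (wordsOfLength L n).card := fun n => by
    rw [hp, ncard_eq_card_wordsOfLength]
  have hs_succ : ∀ n, m ≤ n → s (n + 1) = s n := fun n hn => by
    have hrec := card_wordsOfLength_add_two_add_card hfac hm hn
    simp only [hs, hp_card, add_assoc, one_add_one_eq_two]
    omega
  have hs_const := eq_of_forall_le_succ_eq hs_succ
  exact ⟨m, hs_const, s m, _,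
    eq_mul_add_of_forall_le_sub_eq fun n hn => by rw [← hs, hs_const n hn]⟩

theorem stmt6 {A : Type*} [Fintype A] (L : Set (List A))
    (hfac : Factorial L) (hext : Extendable L)
    (hdendric : EvDendric L)
    (p : ℕ → ℤ) (hp : ∀ m, p m = Set.ncard {w : List A | w ∈ L ∧ w.length = m})
    (s : ℕ → ℤ) (hs : ∀ m, s m = p (m + 1) - p m) :
    ∃ N : ℕ, (∀ n, N ≤ n → s n = s N) ∧
      ∃ c d : ℤ, ∀ n, N ≤ n → p n = c * n + d :=
  stmt6_general L hfac hdendric p hp s hs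
end

section
/- Let X be a shift space over finite alphabet A such that every word of length ≥ m in L(X) is neutral. Then for every finite X-maximal suffix code U ⊆ L(X) all of whose words have length ≥ m, one has Σ_{u ∈ U} (r(u) - 1) = Σ_{w ∈ L_m(X)} (r(w) - 1), where r(u) = #{b ∈ A : ub ∈ L(X)}. -/
/-- `U` is a suffix code: no word of `U` is a proper suffix of another. -/
def IsSuffixCode {A : Type*} (U : Set (List A)) : Prop :=
  ∀ u ∈ U, ∀ v ∈ U, u <:+ v → u = v

/-- `U ⊆ L` is an `X`-maximal suffix code: it is not properly contained in a
suffix code contained in `L`. -/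
def IsMaximalSuffixCode {A : Type*} (L U : Set (List A)) : Prop :=
  U ⊆ L ∧ IsSuffixCode U ∧
    ∀ U' : Set (List A), U' ⊆ L → IsSuffixCode U' → U ⊆ U' → U = U'

open scoped Classical

open Finset

section

variable {A : Type*}

lemma Factorial.mem_of_suffix {L : Set (List A)} (hfac : Factorial L) {v x : List A}
    (hvx : v <:+ x) (hx : x ∈ L) : v ∈ L := by
  obtain ⟨t, rfl⟩ := hvx
  exact (hfac t v hx).2

lemma exists_cons_suffix_of_suffix_of_ne {w q : List A} (hwq : w <:+ q) (hne : w ≠ q) :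
    ∃ b, b :: w <:+ q := by
  obtain ⟨t, rfl⟩ := hwq
  rcases t.eq_nil_or_concat with rfl | ⟨t₀, b, rfl⟩
  · exact absurd rfl hne
  · exact ⟨b, t₀, by simp⟩

lemma Extendable.exists_left_extension_length_ge {L : Set (List A)} (hext : Extendable L)
    (hfac : Factorial L) (n : ℕ) {x : List A} (hx : x ∈ L) : ∃ y ∈ L, x <:+ y ∧ n ≤ y.length := by
  induction n with
  | zero => exact ⟨x, hx, List.suffix_refl x, Nat.zero_le _⟩
  | succ n ih =>
    obtain ⟨y, hy, hxy, hlen⟩ := ih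
    obtain ⟨a, b, hab⟩ := hext y hy
    refine ⟨a :: y, (hfac (a :: y) [b] hab).1, hxy.trans (List.suffix_cons a y), ?_⟩
    simpa using hlen

section SuffixCode

lemma IsSuffixCode.mono {U V : Set (List A)} (hU : IsSuffixCode U) (hVU : V ⊆ U) :
    IsSuffixCode V :=
  fun u hu v hv => hU u (hVU hu) v (hVU hv)

lemma IsSuffixCode.insert {U : Set (List A)} {x : List A} (hU : IsSuffixCode U)
    (hsuf : ∀ u ∈ U, u <:+ x → u = x) (hsuf' : ∀ u ∈ U, x <:+ u → x = u) :
    IsSuffixCode (insert x U) := by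
  rintro u (rfl | hu) v (rfl | hv) huv
  · rfl
  · exact hsuf' v hv huv
  · exact hsuf u hu huv
  · exact hU u hu v hv huv

def SuffixComplete (L U : Set (List A)) (K : ℕ) : Prop :=
  ∀ x ∈ L, K ≤ x.length → ∃ v ∈ U, v <:+ x

lemma SuffixComplete.of_length_le {L U : Set (List A)} (hfac : Factorial L)
    (hext : Extendable L) {K K' : ℕ} (h : SuffixComplete L U K)
    (hlen : ∀ u ∈ U, u.length ≤ K') : SuffixComplete L U K' := by
  intro x hx hx'
  obtain ⟨y, hy, hxy, hyK⟩ := hext.exists_left_extension_length_ge hfac K hx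
  obtain ⟨v, hv, hvy⟩ := h y hy hyK
  exact ⟨v, hv, List.suffix_of_suffix_length_le hvy hxy ((hlen v hv).trans hx')⟩

/-- A finite `X`-maximal suffix code is complete: otherwise the suffix of length `max |u|` of a
long word without suffix in `U` could be added to `U`. -/
lemma IsMaximalSuffixCode.exists_suffixComplete {L U : Set (List A)} (hfac : Factorial L)
    (hUfin : U.Finite) (hU : IsMaximalSuffixCode L U) : ∃ K, SuffixComplete L U K := by
  obtain ⟨hUL, hcode, hmax⟩ := hU
  set K := hUfin.toFinset.sup List.length
  have hUK : ∀ u ∈ U, u.length ≤ K := fun u hu => le_sup (hUfin.mem_toFinset.mpr hu)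
  refine ⟨K, fun x hx hxK => ?_⟩
  by_contra! hnone
  set x' := x.drop (x.length - K)
  have hx'x : x' <:+ x := List.drop_suffix _ _
  have hx'K : x'.length = K := by simp only [x', List.length_drop]; omega
  have hcode' : IsSuffixCode (insert x' U) :=
    hcode.insert (fun u hu hux' => absurd (hux'.trans hx'x) (hnone u hu))
      (fun u hu hx'u => hx'u.eq_of_length (by have := hx'u.length_le; grind [hUK u hu]))
  have hx'U : x' ∈ U := by
    rw [hmax _ (Set.insert_subset (hfac.mem_of_suffix hx'x hx) hUL) hcode'
      (Set.subset_insert _ _)]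
    exact Set.mem_insert _ _
  exact hnone x' hx'U hx'x

lemma IsSuffixCode.not_suffix_of_cons_mem {U : Set (List A)} (hcode : IsSuffixCode U) {a : A}
    {w : List A} (hu : a :: w ∈ U) {v : List A} (hv : v ∈ U) (hvw : v <:+ w) : False := by
  have := hcode v hv _ hu (hvw.trans (List.suffix_cons a w))
  subst this
  simpa using hvw.length_le

lemma IsSuffixCode.cons_mem_of_suffixComplete {L U : Set (List A)} (hcode : IsSuffixCode U)
    {a : A} {w : List A} (hcomp : SuffixComplete L U (w.length + 1)) (hu : a :: w ∈ U) {b : A}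
    (hb : b :: w ∈ L) : b :: w ∈ U := by
  obtain ⟨v, hv, hvb⟩ := hcomp _ hb (by simp)
  rcases List.suffix_cons_iff.mp hvb with rfl | hvw
  · exact hv
  · exact (hcode.not_suffix_of_cons_mem hu hv hvw).elim

lemma coe_eq_of_length_eq {L : Set (List A)} {m : ℕ} (hfac : Factorial L)
    (hext : Extendable L) {U : Finset (List A)} (hUL : (U : Set (List A)) ⊆ L)
    (hlen : ∀ u ∈ U, u.length = m) (hcomp : ∃ K, SuffixComplete L U K) :
    (U : Set (List A)) = {w | w ∈ L ∧ w.length = m} := by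
  obtain ⟨K, hK⟩ := hcomp
  have hm := hK.of_length_le hfac hext (K' := m) fun u hu => (hlen u hu).le
  ext x
  refine ⟨fun hx => ⟨hUL hx, hlen x hx⟩, fun ⟨hxL, hxm⟩ => ?_⟩
  obtain ⟨v, hv, hvx⟩ := hm x hxL hxm.ge
  rwa [← hvx.eq_of_length ((hlen v hv).trans hxm.symm)]

end SuffixCode

section Counting

variable [Fintype A]

lemma ncard_setOf_eq_sum {B : Type*} [Fintype B] (p : B → Prop) :
    {x | p x}.ncard = ∑ x, if p x then 1 else 0 := by
  rw [Set.ncard_eq_toFinset_card', Set.toFinset_ofPred, card_filter]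

lemma ecount_eq_sum_rcount (L : Set (List A)) (w : List A) :
    ecount L w = ∑ b, rcount L (b :: w) := by
  simp only [ecount, rcount, ncard_setOf_eq_sum, Fintype.sum_prod_type, List.cons_append]

noncomputable def leftExtensions (L : Set (List A)) (w : List A) : Finset A :=
  univ.filter fun a => a :: w ∈ L

@[simp]
lemma mem_leftExtensions {L : Set (List A)} {w : List A} {a : A} :
    a ∈ leftExtensions L w ↔ a :: w ∈ L := by
  simp [leftExtensions]

lemma lcount_eq_card_leftExtensions (L : Set (List A)) (w : List A) :
    lcount L w = (leftExtensions L w).card := by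
  rw [lcount, Set.ncard_eq_toFinset_card', Set.toFinset_ofPred, leftExtensions]

lemma rcount_eq_zero_of_not_mem {L : Set (List A)} (hfac : Factorial L) {x : List A}
    (hx : x ∉ L) : rcount L x = 0 := by
  rw [rcount, Set.ncard_eq_zero]
  exact Set.eq_empty_of_forall_notMem fun b hb => hx (hfac x [b] hb).1

def IsNeutral (L : Set (List A)) (w : List A) : Prop :=
  (ecount L w : ℤ) = lcount L w + rcount L w - 1

lemma IsNeutral.sum_rcount_cons_sub_one {L : Set (List A)} (hfac : Factorial L) {w : List A}
    (hw : IsNeutral L w) :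
    ∑ b ∈ leftExtensions L w, ((rcount L (b :: w) : ℤ) - 1) = rcount L w - 1 := by
  have hsum : ∑ b ∈ leftExtensions L w, rcount L (b :: w) = ecount L w := by
    rw [ecount_eq_sum_rcount, leftExtensions, sum_filter_of_ne]
    exact fun b _ hb => by_contra fun hbw => hb (rcount_eq_zero_of_not_mem hfac hbw)
  rw [sum_sub_distrib, ← Nat.cast_sum, hsum, hw, lcount_eq_card_leftExtensions]
  simp only [sum_const, nsmul_eq_mul, mul_one]
  ring

end Counting

section Collapse

variable [Fintype A] {L : Set (List A)} {U : Finset (List A)} {a : A} {w : List A}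

noncomputable def collapse (L : Set (List A)) (U : Finset (List A)) (w : List A) :
    Finset (List A) :=
  insert w (U \ (leftExtensions L w).image (· :: w))

lemma image_leftExtensions_subset (hcode : IsSuffixCode (U : Set (List A)))
    (hcomp : SuffixComplete L U (w.length + 1)) (hu : a :: w ∈ U) :
    (leftExtensions L w).image (· :: w) ⊆ U := by
  intro x hx
  obtain ⟨b, hb, rfl⟩ := mem_image.mp hx
  exact hcode.cons_mem_of_suffixComplete hcomp hu (mem_leftExtensions.mp hb)

lemma coe_collapse_subset (hfac : Factorial L) (hUL : (U : Set (List A)) ⊆ L)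
    (hu : a :: w ∈ U) : (collapse L U w : Set (List A)) ⊆ L := by
  rw [collapse, coe_insert]
  exact Set.insert_subset (hfac [a] w (hUL hu)).2 (subset_trans (by simp) hUL)

lemma isSuffixCode_collapse (hfac : Factorial L) (hUL : (U : Set (List A)) ⊆ L)
    (hcode : IsSuffixCode (U : Set (List A))) (hcomp : SuffixComplete L U (w.length + 1))
    (hu : a :: w ∈ U) : IsSuffixCode (collapse L U w : Set (List A)) := by
  rw [collapse, coe_insert]
  refine (hcode.mono (by simp)).insert
    (fun v hv hvw => (hcode.not_suffix_of_cons_mem hu (mem_sdiff.mp hv).1 hvw).elim)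
    (fun q hq hwq => ?_)
  obtain ⟨hqU, hqT⟩ := mem_sdiff.mp hq
  by_contra hne
  obtain ⟨b, hbq⟩ := exists_cons_suffix_of_suffix_of_ne hwq hne
  have hbL : b :: w ∈ L := hfac.mem_of_suffix hbq (hUL hqU)
  have hbU := hcode.cons_mem_of_suffixComplete hcomp hu hbL
  refine hqT (mem_image.mpr ⟨b, mem_leftExtensions.mpr hbL, ?_⟩)
  exact hcode _ hbU _ hqU hbq

lemma suffixComplete_collapse (hcomp : SuffixComplete L U (w.length + 1)) :
    SuffixComplete L (collapse L U w) (w.length + 1) := by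
  intro x hx hxK
  obtain ⟨v, hv, hvx⟩ := hcomp x hx hxK
  by_cases hvT : v ∈ (leftExtensions L w).image (· :: w)
  · obtain ⟨b, -, rfl⟩ := mem_image.mp hvT
    exact ⟨w, mem_insert_self _ _, (List.suffix_cons b w).trans hvx⟩
  · exact ⟨v, mem_insert_of_mem (mem_sdiff.mpr ⟨hv, hvT⟩), hvx⟩

lemma sum_collapse_add {M : Type*} [AddCommMonoid M] (g : List A → M)
    (hcode : IsSuffixCode (U : Set (List A))) (hcomp : SuffixComplete L U (w.length + 1))
    (hu : a :: w ∈ U) :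
    ∑ x ∈ collapse L U w, g x + ∑ b ∈ leftExtensions L w, g (b :: w) = g w + ∑ x ∈ U, g x := by
  have hwU : w ∉ U := fun hw => hcode.not_suffix_of_cons_mem hu hw (List.suffix_refl w)
  rw [collapse, sum_insert fun hw => hwU (mem_sdiff.mp hw).1, add_assoc,
    ← sum_image fun b _ c _ h => (List.cons.inj h).1,
    sum_sdiff (image_leftExtensions_subset hcode hcomp hu)]

end Collapse

theorem sum_rcount_sub_one_eq [Fintype A] {L : Set (List A)} {m : ℕ} (hfac : Factorial L)
    (hext : Extendable L) (hneut : ∀ w ∈ L, m ≤ w.length → IsNeutral L w) (U : Finset (List A))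
    (hUL : (U : Set (List A)) ⊆ L) (hcode : IsSuffixCode (U : Set (List A)))
    (hlen : ∀ u ∈ U, m ≤ u.length) (hcomp : ∃ K, SuffixComplete L U K) :
    ∑ u ∈ U, ((rcount L u : ℤ) - 1)
      = ∑ᶠ w ∈ {w : List A | w ∈ L ∧ w.length = m}, ((rcount L w : ℤ) - 1) := by
  induction hN : ∑ u ∈ U, u.length using Nat.strong_induction_on generalizing U with
  | _ N ih =>
  by_cases hshort : ∀ u ∈ U, u.length ≤ m
  · rw [← coe_eq_of_length_eq hfac hext hUL (fun u hu => (hshort u hu).antisymm (hlen u hu))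
      hcomp, finsum_mem_coe_finset]
  push Not at hshort
  obtain ⟨u₀, hu₀, hmu₀⟩ := hshort
  obtain ⟨u, hu, hmax⟩ := exists_max_image U List.length ⟨u₀, hu₀⟩
  obtain ⟨a, w, rfl⟩ := List.exists_cons_of_ne_nil (List.ne_nil_of_length_pos
    (by grind [hmax u₀ hu₀] : 0 < u.length))
  have hmw : m ≤ w.length := by grind [hmax u₀ hu₀]
  obtain ⟨K, hK⟩ := hcomp
  have hcompw : SuffixComplete L U (w.length + 1) :=
    hK.of_length_le hfac hext fun v hv => by simpa using hmax v hv
  have hlen_sum := sum_collapse_add List.length hcode hcompw hu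
  have hsum : ∑ x ∈ U, ((rcount L x : ℤ) - 1) = ∑ x ∈ collapse L U w, ((rcount L x : ℤ) - 1) := by
    have := sum_collapse_add (fun x => (rcount L x : ℤ) - 1) hcode hcompw hu
    rw [(hneut w (hfac [a] w (hUL hu)).2 hmw).sum_rcount_cons_sub_one hfac] at this
    linarith
  rw [hsum]
  refine ih _ ?_ _ (coe_collapse_subset hfac hUL hu)
    (isSuffixCode_collapse hfac hUL hcode hcompw hu) ?_
    ⟨_, suffixComplete_collapse hcompw⟩ rfl
  · have : w.length < ∑ b ∈ leftExtensions L w, (b :: w).length :=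
      single_le_sum (f := fun b => (b :: w).length) (fun b _ => Nat.zero_le _)
        (mem_leftExtensions.mpr (hUL hu))
    omega
  · intro x hx
    rcases mem_insert.mp hx with rfl | hx
    · exact hmw
    · exact hlen x (mem_sdiff.mp hx).1

end

theorem stmt14 {A : Type*} [Fintype A] (L : Set (List A))
    (hfac : Factorial L) (hext : Extendable L) (m : ℕ)
    (hneut : ∀ w ∈ L, m ≤ w.length →
      (ecount L w : ℤ) = lcount L w + rcount L w - 1)
    (U : Set (List A)) (hUfin : U.Finite)
    (hUmax : IsMaximalSuffixCode L U)
    (hUlen : ∀ u ∈ U, m ≤ u.length) :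
    ∑ᶠ u ∈ U, ((rcount L u : ℤ) - 1)
      = ∑ᶠ w ∈ {w : List A | w ∈ L ∧ w.length = m}, ((rcount L w : ℤ) - 1) := by
  have hcomp := hUmax.exists_suffixComplete hfac hUfin
  lift U to Finset (List A) using hUfin
  rw [finsum_mem_coe_finset]
  exact sum_rcount_sub_one_eq hfac hext hneut U hUmax.1 hUmax.2.1 hUlen hcomp
end
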